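/- (Analytic core of Theorem 1.) Let s ≤ n be natural numbers, m : ℕ → ℝ, and p : ℕ → {0,1}. Assume: (i) for every i with s ≤ i < n, if p(i+1) = 0 then m(i+1) ≥ m(i) − 3.73·ln 2, and if p(i+1) = 1 then m(i+1) = 2·m(i); (ii) m(i) ≥ 14.92·ln 2 for every i with s ≤ i ≤ n; (iii) Σ_{i=s+1}^{n} p(i) ≥ (9/20)·(n−s). Then the Gaussian-approximation bit error probability of the resulting splitting channel satisfies Q(√(m(n)/2)) < 2^{−2.33(n−s)/2 − 3.73}, where Q(x) = (1/√(2π)) ∫_{x}^{∞} e^{−t²/2} dt. Hence splitting channels whose polarization trajectory lies in T_s(2^{−4}) ∩ U_{s,n}(1/20) have error probability O(N^{−2.33/2}) for code length N = 2^n, i.e., their capacities approach 1. -/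

import Mathlib

/-!
Each doubling step multiplies the LLR mean by `2`, and since the mean never drops below
`14.92 ln 2 = 4 · 3.73 ln 2`, every other step multiplies it by at least `3/4`. With at least
`9/20` of the steps doubling, `m n ≥ 14.92 ln 2 · e^{0.15 (n - s)}`. The Mills-ratio bound
`Q x ≤ e^{-x²/2} / (x √(2π))` gives `Q (√(m n / 2)) ≤ e^{-m n / 4} / 5`, and the quadratic
lower bound for `e^{0.15 (n - s)}` beats the linear exponent `2.33 (n - s) / 2 · ln 2`.
-/

open Real MeasureTheory Finset

noncomputable def gaussQ (x : ℝ) : ℝ :=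
  (1 / Real.sqrt (2 * Real.pi)) * ∫ t in Set.Ioi x, Real.exp (-t ^ 2 / 2)

lemma integrable_exp_neg_sq_div_two : Integrable fun t : ℝ => exp (-t ^ 2 / 2) := by
  simpa [neg_div, div_eq_inv_mul] using integrable_exp_neg_mul_sq (b := 1 / 2) (by norm_num)

lemma integrable_mul_exp_neg_sq_div_two : Integrable fun t : ℝ => t * exp (-t ^ 2 / 2) := by
  simpa [neg_div, div_eq_inv_mul] using integrable_mul_exp_neg_mul_sq (b := 1 / 2) (by norm_num)

lemma integral_Ioi_mul_exp_neg_sq_div_two (x : ℝ) :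
    ∫ t in Set.Ioi x, t * exp (-t ^ 2 / 2) = exp (-x ^ 2 / 2) := by
  have hderiv : ∀ t ∈ Set.Ici x,
      HasDerivAt (fun t : ℝ => -exp (-t ^ 2 / 2)) (t * exp (-t ^ 2 / 2)) t := fun t _ => by
    have hsq : HasDerivAt (fun t : ℝ => -t ^ 2 / 2) (-t) t :=
      ((hasDerivAt_pow 2 t).neg.div_const 2).congr_deriv (by ring)
    exact hsq.exp.neg.congr_deriv (by ring)
  have hlim : Filter.Tendsto (fun t : ℝ => -exp (-t ^ 2 / 2)) Filter.atTop (nhds 0) := by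
    have hsq : Filter.Tendsto (fun t : ℝ => -t ^ 2 / 2) Filter.atTop Filter.atBot :=
      (Filter.tendsto_neg_atBot_iff.mpr (Filter.tendsto_pow_atTop two_ne_zero)).atBot_div_const
        two_pos
    simpa using (tendsto_exp_atBot.comp hsq).neg
  rw [integral_Ioi_of_hasDerivAt_of_tendsto' hderiv
    integrable_mul_exp_neg_sq_div_two.integrableOn hlim]
  simp

/-- The Mills-ratio bound: on `t > x` the integrand is at most `(t / x) exp (-t² / 2)`,
which integrates in closed form. -/
lemma gaussQ_le_exp_div {x : ℝ} (hx : 0 < x) :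
    gaussQ x ≤ exp (-x ^ 2 / 2) / (x * sqrt (2 * π)) := by
  have hmono : ∫ t in Set.Ioi x, exp (-t ^ 2 / 2) ≤
      ∫ t in Set.Ioi x, x⁻¹ * (t * exp (-t ^ 2 / 2)) := by
    refine setIntegral_mono_on integrable_exp_neg_sq_div_two.integrableOn
      (integrable_mul_exp_neg_sq_div_two.integrableOn.const_mul _) measurableSet_Ioi
      fun t (ht : x < t) => ?_
    rw [← mul_assoc]
    exact le_mul_of_one_le_left (exp_pos _).le ((one_le_inv_mul₀ hx).mpr ht.le)
  rw [integral_const_mul, integral_Ioi_mul_exp_neg_sq_div_two] at hmono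
  calc gaussQ x ≤ 1 / sqrt (2 * π) * (x⁻¹ * exp (-x ^ 2 / 2)) :=
        mul_le_mul_of_nonneg_left hmono (by positivity)
    _ = exp (-x ^ 2 / 2) / (x * sqrt (2 * π)) := by field_simp

lemma gaussQ_sqrt_half_le {M : ℝ} (hM : 8 ≤ M) : gaussQ (sqrt (M / 2)) ≤ exp (-M / 4) / 5 := by
  have hx : 2 ≤ sqrt (M / 2) := le_sqrt_of_sq_le (by linarith)
  have hpi : 2.5 ≤ sqrt (2 * π) := le_sqrt_of_sq_le (by nlinarith [pi_gt_d6])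
  calc gaussQ (sqrt (M / 2)) ≤ exp (-sqrt (M / 2) ^ 2 / 2) / (sqrt (M / 2) * sqrt (2 * π)) :=
        gaussQ_le_exp_div (by linarith)
    _ ≤ exp (-M / 4) / 5 := by
        rw [sq_sqrt (by linarith), show -(M / 2) / 2 = -M / 4 by ring]
        gcongr
        nlinarith

theorem mul_prod_Icc_le_of_mul_le {R : Type*} [CommSemiring R] [PartialOrder R]
    [IsOrderedRing R] {m r : ℕ → R} {s n : ℕ} (hsn : s ≤ n)
    (hr : ∀ i, s < i → i ≤ n → 0 ≤ r i)
    (hm : ∀ i, s ≤ i → i < n → r (i + 1) * m i ≤ m (i + 1)) :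
    m s * ∏ i ∈ Icc (s + 1) n, r i ≤ m n := by
  induction n, hsn using Nat.le_induction with
  | base => simp
  | succ n hsn ih =>
    calc m s * ∏ i ∈ Icc (s + 1) (n + 1), r i
        = r (n + 1) * (m s * ∏ i ∈ Icc (s + 1) n, r i) := by
          rw [prod_Icc_succ_top (by omega)]; ring
      _ ≤ r (n + 1) * m n := by
          gcongr
          · exact hr _ (by omega) le_rfl
          · exact ih (fun i hi hin => hr i hi (by omega)) fun i hi hin => hm i hi (by omega)
      _ ≤ m (n + 1) := hm n hsn (by omega)

theorem le_llr_mean_of_trajectory {s n : ℕ} (hsn : s ≤ n) {m : ℕ → ℝ} {p : ℕ → ℕ}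
    (hp : ∀ i, p i = 0 ∨ p i = 1)
    (hstep : ∀ i, s ≤ i → i < n →
      (p (i + 1) = 0 → m (i + 1) ≥ m i - 3.73 * log 2) ∧
      (p (i + 1) = 1 → m (i + 1) = 2 * m i))
    (hT : ∀ i, s ≤ i → i ≤ n → m i ≥ 14.92 * log 2) :
    14.92 * log 2 * ((3 / 4) ^ (n - s) * (8 / 3) ^ (∑ i ∈ Icc (s + 1) n, p i)) ≤ m n := by
  have hprod : ∏ i ∈ Icc (s + 1) n, (3 / 4 * (8 / 3) ^ p i : ℝ) =
      (3 / 4) ^ (n - s) * (8 / 3) ^ (∑ i ∈ Icc (s + 1) n, p i) := by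
    rw [prod_mul_distrib, prod_const, Nat.card_Icc, prod_pow_eq_pow_sum, Nat.add_sub_add_right]
  rw [← hprod]
  refine (mul_le_mul_of_nonneg_right (hT s le_rfl hsn) (by positivity)).trans
    (mul_prod_Icc_le_of_mul_le hsn (fun _ _ _ => by positivity) fun i hi hin => ?_)
  rcases hp (i + 1) with h | h <;> simp only [h]
  · have := hT i hi hin.le
    linarith [(hstep i hi hin).1 h]
  · linarith [(hstep i hi hin).2 h]

lemma exp_le_three_quarters_pow_mul {d k : ℕ} (hk : 0.45 * (d : ℝ) ≤ k) :
    exp (0.15 * d) ≤ (3 / 4 : ℝ) ^ d * (8 / 3) ^ k := by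
  have hlog34 : log (3 / 4) = log 3 - 2 * log 2 := by
    rw [log_div three_ne_zero four_ne_zero, show (4 : ℝ) = 2 ^ 2 by norm_num, log_pow]
    push_cast; ring
  have hlog83 : log (8 / 3) = 3 * log 2 - log 3 := by
    rw [log_div (by norm_num) three_ne_zero, show (8 : ℝ) = 2 ^ 3 by norm_num, log_pow]
    push_cast; ring
  rw [← le_log_iff_exp_le (by positivity), log_mul (by positivity) (by positivity), log_pow,
    log_pow, hlog34, hlog83]
  have h3 := log_three_gt_d9
  have h3' := log_three_lt_d9
  have h2 := log_two_gt_d9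
  have h2' := log_two_lt_d9
  have hd : (0 : ℝ) ≤ d := d.cast_nonneg
  nlinarith [mul_le_mul_of_nonneg_right hk (by linarith : 0 ≤ 3 * log 2 - log 3)]

lemma exp_neg_div_four_div_five_lt {M D : ℝ} (hD : 0 ≤ D)
    (hM : 14.92 * log 2 * exp (0.15 * D) ≤ M) :
    exp (-M / 4) / 5 < exp (log 2 * (-(2.33 * D) / 2 - 3.73)) := by
  have hlog5 : 2 * log 2 + 1 / 5 ≤ log 5 := by
    have h := one_sub_inv_le_log_of_pos (x := 5 / 4) (by norm_num)
    rw [log_div (by norm_num) four_ne_zero, show (4 : ℝ) = 2 ^ 2 by norm_num, log_pow] at h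
    norm_num at h
    linarith
  have hexp := quadratic_le_exp_of_nonneg (by positivity : 0 ≤ 0.15 * D)
  have h2 := log_two_gt_d9
  have h2' := log_two_lt_d9
  rw [div_lt_iff₀ (by norm_num), ← exp_log (by norm_num : (0 : ℝ) < 5), ← exp_add, exp_lt_exp]
  -- the quadratic in `D` that remains is smallest near `D = 7.2`
  nlinarith [mul_le_mul_of_nonneg_left hexp (by positivity : (0 : ℝ) ≤ 14.92 * log 2),
    mul_nonneg (log_pos one_lt_two).le (sq_nonneg (D - 7.2))]

/-- Analytic core of Theorem 1: a splitting channel whose Gaussian-approximation polarization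
trajectory lies in `T_s(2^{−4}) ∩ U_{s,n}(1/20)` (odd steps lose at most `3.73 ln 2`, even
steps double, the LLR mean stays above `14.92 ln 2`, and at least a `9/20` fraction of the
steps are doubling steps) has bit error probability
`Q(√(m(n)/2)) < 2^{−2.33(n−s)/2 − 3.73}`, i.e. `O(N^{−2.33/2})` for code length `N = 2^n`. -/
theorem ga_splitting_channel_ber_bound (s n : ℕ) (hsn : s ≤ n)
    (m : ℕ → ℝ) (p : ℕ → ℕ) (hp : ∀ i, p i = 0 ∨ p i = 1)
    (hstep : ∀ i, s ≤ i → i < n →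
      (p (i + 1) = 0 → m (i + 1) ≥ m i - 3.73 * Real.log 2) ∧
      (p (i + 1) = 1 → m (i + 1) = 2 * m i))
    (hT : ∀ i, s ≤ i → i ≤ n → m i ≥ 14.92 * Real.log 2)
    (hU : (∑ i ∈ Finset.Icc (s + 1) n, (p i : ℝ)) ≥ (9 / 20) * ((n : ℝ) - s)) :
    gaussQ (Real.sqrt (m n / 2)) < (2 : ℝ) ^ (-(2.33 * ((n : ℝ) - s)) / 2 - 3.73) := by
  have hD : ((n - s : ℕ) : ℝ) = n - s := Nat.cast_sub hsn
  have hgrowth : exp (0.15 * ((n : ℝ) - s)) ≤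
      (3 / 4 : ℝ) ^ (n - s) * (8 / 3) ^ (∑ i ∈ Icc (s + 1) n, p i) := by
    rw [← hD]
    exact exp_le_three_quarters_pow_mul (by push_cast; linarith)
  have hm : 14.92 * log 2 * exp (0.15 * ((n : ℝ) - s)) ≤ m n :=
    (mul_le_mul_of_nonneg_left hgrowth (by positivity)).trans
      (le_llr_mean_of_trajectory hsn hp hstep hT)
  have hQ := gaussQ_sqrt_half_le (M := m n) (by linarith [hT n hsn le_rfl, log_two_gt_d9])
  rw [rpow_def_of_pos two_pos]
  exact hQ.trans_lt (exp_neg_div_four_div_five_lt (by rw [← hD]; positivity) hm)
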